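/- Comparison of windowed costs with their unitary versions: Let f₁, …, f_T : (ℝ^d)^h → ℝ each be G-Lipschitz with respect to the Euclidean norm on (ℝ^d)^h. Let x₁, …, x_T ∈ ℝ^d and pad x_t = x₁ for all t ≤ 0. Then |Σ_{t=1}^T [f_t(x_{t−h+1:t}) − f_t(x_t, x_t, …, x_t)]| ≤ G·h²·Σ_{t=1}^{T−1} ‖x_t − x_{t+1}‖. (This is inequality (A.13) in the proof of Theorem 1 of the paper.) -/

import Mathlib

/-- The sequence `x₁, x₂, … : ℕ → ℝ^d` (1-based) extended to integer indices, padded with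
`x₁` for all indices `t ≤ 0`. -/
noncomputable def padSeq {d : ℕ} (x : ℕ → EuclideanSpace ℝ (Fin d)) (t : ℤ) :
    EuclideanSpace ℝ (Fin d) :=
  if 1 ≤ t then x t.toNat else x 1

/-- The `t`-th window `x_{t-h+1:t} = (x_{t-h+1}, …, x_t) ∈ (ℝ^d)^h`, where the product
space carries the Euclidean (`L²`) norm. -/
noncomputable def windowSeq {d : ℕ} (h : ℕ) (x : ℕ → EuclideanSpace ℝ (Fin d)) (t : ℤ) :
    PiLp 2 (fun _ : Fin h => EuclideanSpace ℝ (Fin d)) :=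
  WithLp.toLp 2 (fun i => padSeq x (t - h + 1 + i))

/-!
Every entry of the `t`-th window is some `x_r` with `r` in `[max 1 (t + 1 - h), t]`, so it
differs from `x_t` by at most the path length `∑ ‖x_s - x_{s+1}‖` of `x` over that range. By the
Lipschitz bound the `t`-th summand is then at most `G h` times this path length, and summing over
`t` counts each increment `‖x_s - x_{s+1}‖` at most `h` times.
-/

open Finset

theorem PiLp.norm_le_sum_norm {ι : Type*} [Fintype ι] {p : ENNReal} [Fact (1 ≤ p)]
    {β : ι → Type*} [∀ i, SeminormedAddCommGroup (β i)] (z : PiLp p β) :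
    ‖z‖ ≤ ∑ i, ‖z i‖ := by
  classical
  calc ‖z‖ = ‖∑ i, PiLp.single p i (z i)‖ := by
        congr 1; ext j; simp [WithLp.ofLp_sum]
    _ ≤ ∑ i, ‖PiLp.single p i (z i)‖ := norm_sum_le _ _
    _ = ∑ i, ‖z i‖ := by simp only [PiLp.norm_single]

theorem nonneg_of_abs_sub_le_mul_norm {E : Type*} [NormedAddCommGroup E] [Nontrivial E]
    {f : E → ℝ} {G : ℝ} (hf : ∀ z w, |f z - f w| ≤ G * ‖z - w‖) : 0 ≤ G := by
  obtain ⟨z, hz⟩ := exists_ne (0 : E)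
  refine nonneg_of_mul_nonneg_left ((abs_nonneg _).trans (hf z 0)) ?_
  simpa using hz

theorem norm_sub_le_sum_Ico_norm_sub {E : Type*} [SeminormedAddCommGroup E] (x : ℕ → E)
    {a b : ℕ} (hab : a ≤ b) : ‖x a - x b‖ ≤ ∑ s ∈ Ico a b, ‖x s - x (s + 1)‖ := by
  simpa only [dist_eq_norm] using dist_le_Ico_sum_dist x hab

/-- Each `s` lies in the window `[t + 1 - h, t)` of fewer than `h` indices `t`. -/
theorem sum_Icc_sum_Ico_window_le {a : ℕ → ℝ} (ha : ∀ s, 0 ≤ a s) (h T : ℕ) :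
    ∑ t ∈ Icc 1 T, ∑ s ∈ Ico (max 1 (t + 1 - h)) t, a s ≤ h * ∑ s ∈ Icc 1 (T - 1), a s := by
  rw [sum_comm' (t' := Icc 1 (T - 1)) (s' := fun s => Ioo s (min (T + 1) (s + h)))
    (by intro t s; simp only [mem_Icc, mem_Ico, mem_Ioo]; omega), mul_sum]
  gcongr with s
  rw [sum_const, nsmul_eq_mul]
  gcongr
  · exact ha s
  · exact_mod_cast (card_le_card (Ioo_subset_Ioo_right (min_le_right _ _))).trans
      (by rw [Nat.card_Ioo]; omega)

section Window

variable {d h : ℕ} (x : ℕ → EuclideanSpace ℝ (Fin d))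

theorem windowSeq_apply (t : ℕ) (i : Fin h) :
    windowSeq h x t i = x (max 1 (t + 1 + i - h)) := by
  have hi := i.isLt
  unfold windowSeq padSeq
  rw [PiLp.toLp_apply]
  split_ifs <;> congr 1 <;> omega

theorem norm_windowSeq_apply_sub_le {t : ℕ} (ht : 1 ≤ t) (i : Fin h) :
    ‖windowSeq h x t i - x t‖ ≤ ∑ s ∈ Ico (max 1 (t + 1 - h)) t, ‖x s - x (s + 1)‖ := by
  rw [windowSeq_apply]
  have hi := i.isLt
  refine (norm_sub_le_sum_Ico_norm_sub x (by omega)).trans ?_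
  exact sum_le_sum_of_subset_of_nonneg (Ico_subset_Ico_left (by omega))
    fun s _ _ => norm_nonneg _

theorem norm_windowSeq_sub_const_le {t : ℕ} (ht : 1 ≤ t) :
    ‖windowSeq h x t - WithLp.toLp 2 (fun _ => x t)‖ ≤
      h * ∑ s ∈ Ico (max 1 (t + 1 - h)) t, ‖x s - x (s + 1)‖ := by
  calc _ ≤ ∑ i : Fin h, ‖windowSeq h x t i - x t‖ := PiLp.norm_le_sum_norm _
    _ ≤ ∑ _i : Fin h, ∑ s ∈ Ico (max 1 (t + 1 - h)) t, ‖x s - x (s + 1)‖ :=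
        sum_le_sum fun i _ => norm_windowSeq_apply_sub_le x ht i
    _ = _ := by simp

end Window

/-- If each `f_t : (ℝ^d)^h → ℝ` is `G`-Lipschitz, then for points
`x₁, …, x_T ∈ ℝ^d` padded by `x₁` for `t ≤ 0`,
`|∑_{t=1}^T (f_t(x_{t−h+1:t}) − f_t(x_t, …, x_t))| ≤ G h² ∑_{t=1}^{T−1} ‖x_t − x_{t+1}‖`. -/
theorem window_vs_unitary_sum {d h T : ℕ} (hd : 1 ≤ d) (hh : 1 ≤ h) (hT : 1 ≤ T)
    (G : ℝ)
    (f : ℕ → (PiLp 2 fun _ : Fin h => EuclideanSpace ℝ (Fin d)) → ℝ)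
    (hf : ∀ t, 1 ≤ t → t ≤ T → ∀ z w, |f t z - f t w| ≤ G * ‖z - w‖)
    (x : ℕ → EuclideanSpace ℝ (Fin d)) :
    |∑ t ∈ Finset.Icc 1 T, (f t (windowSeq h x t) - f t (WithLp.toLp 2 (fun _ => x t)))| ≤
      G * h ^ 2 * ∑ t ∈ Finset.Icc 1 (T - 1), ‖x t - x (t + 1)‖ := by
  have : NeZero d := ⟨by omega⟩
  have : NeZero h := ⟨by omega⟩
  have hG : 0 ≤ G := nonneg_of_abs_sub_le_mul_norm (hf 1 le_rfl hT)
  calc _ ≤ ∑ t ∈ Icc 1 T, |f t (windowSeq h x t) - f t (WithLp.toLp 2 (fun _ => x t))| :=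
        abs_sum_le_sum_abs _ _
    _ ≤ ∑ t ∈ Icc 1 T, G * (h * ∑ s ∈ Ico (max 1 (t + 1 - h)) t, ‖x s - x (s + 1)‖) := by
        refine sum_le_sum fun t ht => ?_
        obtain ⟨ht1, htT⟩ := mem_Icc.1 ht
        exact (hf t ht1 htT _ _).trans
          (mul_le_mul_of_nonneg_left (norm_windowSeq_sub_const_le x ht1) hG)
    _ = G * h * ∑ t ∈ Icc 1 T, ∑ s ∈ Ico (max 1 (t + 1 - h)) t, ‖x s - x (s + 1)‖ := by
        rw [mul_assoc, ← mul_sum, ← mul_sum]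
    _ ≤ G * h * (h * ∑ s ∈ Icc 1 (T - 1), ‖x s - x (s + 1)‖) := by
        gcongr
        exact sum_Icc_sum_Ico_window_le (fun s => norm_nonneg _) h T
    _ = _ := by ring
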